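/- If the disjunction (B ∨ C) ∨ Ā is provable in the system with axiom A ∨ ¬A ∨ B̄ and rules permutation, associativity, double negation introduction, and De Morgan, then so is B ∨ C ∨ Ā, and conversely (the associativity rule is invertible with respect to provability). -/

import Mathlib

/-- Propositional formulas built from letters by negation and disjunction. -/
inductive Fm where
  | letter : ℕ → Fm
  | neg : Fm → Fm
  | or : Fm → Fm → Fm
deriving DecidableEq

/-- Boolean evaluation under a valuation of the letters. -/
def Fm.eval (v : ℕ → Bool) : Fm → Bool
  | .letter n => v n
  | .neg a => !(a.eval v)
  | .or a b => a.eval v || b.eval v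

/-- A formula is a tautology if it is true under every valuation. -/
def Taut (A : Fm) : Prop := ∀ v : ℕ → Bool, A.eval v = true

/-- Right-associated disjunction `A ∨ B₁ ∨ ⋯ ∨ Bₙ` (the list possibly empty). -/
def disj : Fm → List Fm → Fm
  | A, [] => A
  | A, B :: l => .or A (disj B l)

/-- Provability: axiom scheme `A ∨ ¬A ∨ B̄`, rules: permutation of disjuncts,
associativity, double negation introduction, De Morgan. -/
inductive Prov : Fm → Prop where
  | ax (A : Fm) (l : List Fm) : Prov (disj A (.neg A :: l))
  | perm (A B : Fm) (l l' : List Fm) : (A :: l).Perm (B :: l') →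
      Prov (disj A l) → Prov (disj B l')
  | assoc (A B : Fm) (l : List Fm) :
      Prov (disj A (B :: l)) → Prov (disj (.or A B) l)
  | dneg (A : Fm) (l : List Fm) :
      Prov (disj A l) → Prov (disj (.neg (.neg A)) l)
  | demorgan (A B : Fm) (l : List Fm) :
      Prov (disj (.neg A) l) → Prov (disj (.neg B) l) →
      Prov (disj (.neg (.or A B)) l)


/-!
Provability coincides with truth-table validity, and the two sides of the equivalence are
tautologies under the same valuations, since `(B ∨ C) ∨ Ā` and `B ∨ C ∨ Ā` evaluate alike.
Soundness is a routine induction on derivations. Completeness is proved for sequents (lists of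
disjuncts, provable up to permutation): a valid sequent either consists of literals, and then
contains a complementary pair and is an instance of the axiom, or it has a compound member,
which one of R2–R4 decomposes into valid sequents of smaller total size.
-/

theorem eval_disj (v : ℕ → Bool) (A : Fm) (l : List Fm) :
    (disj A l).eval v = (A :: l).any (Fm.eval v) := by
  induction l generalizing A <;> simp [disj, Fm.eval, *]

theorem Prov.taut {D : Fm} (h : Prov D) : Taut D := by
  induction h with
  | ax A l =>
      intro v
      simp only [eval_disj, List.any_cons, Fm.eval]
      cases A.eval v <;> simp
  | perm A B l l' hp _ ih => intro v; rw [eval_disj, ← hp.any_eq, ← eval_disj]; exact ih v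
  | assoc A B l _ ih => intro v; simpa [eval_disj, Fm.eval, Bool.or_assoc] using ih v
  | dneg A l _ ih => intro v; simpa [eval_disj, Fm.eval] using ih v
  | demorgan A B l _ _ ihA ihB =>
      intro v
      have hA := ihA v
      have hB := ihB v
      simp only [eval_disj, List.any_cons, Fm.eval] at hA hB ⊢
      revert hA hB
      cases A.eval v <;> cases B.eval v <;> simp

def ProvSeq : List Fm → Prop
  | [] => False
  | A :: l => Prov (disj A l)

def ValidSeq (Γ : List Fm) : Prop := ∀ v : ℕ → Bool, Γ.any (Fm.eval v) = true

theorem validSeq_cons_iff_taut (A : Fm) (l : List Fm) : ValidSeq (A :: l) ↔ Taut (disj A l) := by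
  simp only [ValidSeq, Taut, eval_disj]

theorem ProvSeq.perm {Γ Δ : List Fm} (h : Γ.Perm Δ) (hΓ : ProvSeq Γ) : ProvSeq Δ :=
  match Γ, Δ, h with
  | [], [], _ => hΓ
  | A :: l, B :: l', h => Prov.perm A B l l' h hΓ
  | [], _ :: _, h | _ :: _, [], h => absurd h.length_eq (by simp)

theorem ValidSeq.perm {Γ Δ : List Fm} (h : Γ.Perm Δ) (hΓ : ValidSeq Γ) : ValidSeq Δ :=
  fun v => h.any_eq ▸ hΓ v

def Fm.IsLiteral : Fm → Prop
  | .letter _ => True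
  | .neg (.letter _) => True
  | _ => False

theorem Fm.neg_ne_self (A : Fm) : A.neg ≠ A := by
  induction A <;> simp [*]

theorem ProvSeq.of_mem_of_neg_mem {Γ : List Fm} {A : Fm} (hA : A ∈ Γ) (hnA : A.neg ∈ Γ) :
    ProvSeq Γ := by
  have hnA' : A.neg ∈ Γ.erase A := (List.mem_erase_of_ne A.neg_ne_self).mpr hnA
  refine ProvSeq.perm (Γ := A :: A.neg :: (Γ.erase A).erase A.neg) ?_ (Prov.ax A _)
  exact ((List.perm_cons_erase hA).trans ((List.perm_cons_erase hnA').cons A)).symm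

theorem ProvSeq.of_validSeq_of_isLiteral {Γ : List Fm} (hΓ : ValidSeq Γ)
    (hlit : ∀ D ∈ Γ, D.IsLiteral) : ProvSeq Γ := by
  by_contra hnot
  have hcompl : ∀ n, Fm.letter n ∈ Γ → Fm.neg (.letter n) ∉ Γ :=
    fun n h hn => hnot (ProvSeq.of_mem_of_neg_mem h hn)
  let v : ℕ → Bool := fun n => decide (Fm.neg (.letter n) ∈ Γ)
  have hfalse : Γ.any (Fm.eval v) = false := by
    refine List.any_eq_false.mpr fun D hD => ?_
    match D, hlit D hD with
    | .letter n, _ => simpa [Fm.eval, v] using hcompl n hD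
    | .neg (.letter n), _ => simpa [Fm.eval, v] using hD
  exact absurd (hΓ v) (by simp [hfalse])

def Fm.size : Fm → ℕ
  | .letter _ => 1
  | .neg A => A.size + 1
  | .or A B => A.size + B.size + 1

def weight (Γ : List Fm) : ℕ := (Γ.map Fm.size).sum

theorem ProvSeq.of_validSeq_cons {D : Fm} {Δ : List Fm} (hD : ¬ D.IsLiteral)
    (hvalid : ValidSeq (D :: Δ))
    (ih : ∀ Γ, weight Γ < weight (D :: Δ) → ValidSeq Γ → ProvSeq Γ) : ProvSeq (D :: Δ) := by
  match D, hD with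
  | .letter _, hD | .neg (.letter _), hD => exact absurd trivial hD
  | .or E F, _ =>
      refine Prov.assoc E F Δ (ih (E :: F :: Δ) ?_ fun v => ?_)
      · simp [weight, Fm.size]; omega
      · simpa [Fm.eval, Bool.or_assoc] using hvalid v
  | .neg (.neg E), _ =>
      refine Prov.dneg E Δ (ih (E :: Δ) ?_ fun v => ?_)
      · simp [weight, Fm.size]
      · simpa [Fm.eval] using hvalid v
  | .neg (.or E F), _ =>
      have hvE : ValidSeq (E.neg :: Δ) := fun v => by
        have := hvalid v
        simp only [List.any_cons, Fm.eval] at this ⊢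
        revert this
        cases E.eval v <;> cases F.eval v <;> simp
      have hvF : ValidSeq (F.neg :: Δ) := fun v => by
        have := hvalid v
        simp only [List.any_cons, Fm.eval] at this ⊢
        revert this
        cases E.eval v <;> cases F.eval v <;> simp
      refine Prov.demorgan E F Δ (ih _ ?_ hvE) (ih _ ?_ hvF)
      · simp [weight, Fm.size]
      · simp [weight, Fm.size]

theorem ProvSeq.of_validSeq {Γ : List Fm} (hΓ : ValidSeq Γ) : ProvSeq Γ := by
  induction hw : weight Γ using Nat.strong_induction_on generalizing Γ with
  | _ n ih =>
    by_cases hlit : ∀ D ∈ Γ, D.IsLiteral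
    · exact ProvSeq.of_validSeq_of_isLiteral hΓ hlit
    push Not at hlit
    obtain ⟨D, hD, hnlit⟩ := hlit
    have hperm := List.perm_cons_erase hD
    have hweight : weight (D :: Γ.erase D) = n := hw ▸ (hperm.map Fm.size).sum_eq.symm
    refine ProvSeq.perm hperm.symm (ProvSeq.of_validSeq_cons hnlit (hΓ.perm hperm) ?_)
    exact fun Δ hlt hΔ => ih _ (hweight ▸ hlt) hΔ rfl

theorem prov_iff_taut (A : Fm) : Prov A ↔ Taut A :=
  ⟨Prov.taut, fun h => ProvSeq.of_validSeq ((validSeq_cons_iff_taut A []).mpr h)⟩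

theorem assoc_invertible (B C : Fm) (l : List Fm) :
    Prov (disj (.or B C) l) ↔ Prov (disj B (C :: l)) := by
  simp only [prov_iff_taut, Taut, eval_disj, List.any_cons, Fm.eval, Bool.or_assoc]
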